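/- Suppose an n-dimensional G-space M has a G-invariant coframe field {ωⁱ} of constant structure. Let ψ, φ : X → M be immersions with X connected. If there exist g ∈ G and x₀ ∈ X with ψ(x₀) = g·φ(x₀) and ψ*ωⁱ = φ*ωⁱ for all i on a neighborhood of x₀, then ψ and φ are congruent at x₀, i.e. ψ = g ∘ φ on some neighborhood of x₀. Conversely, if ψ and φ are congruent at x₀ via g ∈ G, then ψ*ωⁱ = φ*ωⁱ near x₀. -/

import Mathlib

open Filter

set_option maxHeartbeats 1000000 in
/-- Suppose the `n`-dimensional `G`-space `E` carries a `G`-invariant coframe field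
`{ωⁱ}` of constant structure.  Two immersions `ψ, φ : X → E` (of the connected space
`X`) are congruent at `x₀` via `g ∈ G` (i.e. `ψ = g ∘ φ` near `x₀`) if and only if
`ψ x₀ = g • φ x₀` and the pullbacks `ψ*ωⁱ` and `φ*ωⁱ` agree on a neighborhood of
`x₀` for all `i`. -/
theorem congruence_iff_coframe_pullbacks_agree
    {E : Type*} [NormedAddCommGroup E] [NormedSpace ℝ E] [FiniteDimensional ℝ E]
    {X : Type*} [NormedAddCommGroup X] [NormedSpace ℝ X]
    {n : ℕ} (hdim : Module.finrank ℝ E = n)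
    {G : Type*} [Group G] [MulAction G E]
    (hact : ∀ g : G, ContDiff ℝ (⊤ : ℕ∞) fun x : E => g • x)
    (ω : Fin n → E → (E →L[ℝ] ℝ))
    (hω : ∀ i, ContDiff ℝ (⊤ : ℕ∞) (ω i))
    (hcoframe : ∀ x : E, LinearIndependent ℝ fun i => ω i x)
    (hinv : ∀ (g : G) (i) (x : E),
      (ω i (g • x)).comp (fderiv ℝ (fun y : E => g • y) x) = ω i x)
    (C : Fin n → Fin n → Fin n → ℝ)
    (hC : ∀ i (x : E) (v w : E),
      fderiv ℝ (ω i) x v w - fderiv ℝ (ω i) x w v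
        = -(1 / 2) * ∑ j, ∑ k, C i j k * (ω j x v * ω k x w - ω j x w * ω k x v))
    (ψ φ : X → E) (hψ : ContDiff ℝ (⊤ : ℕ∞) ψ) (hφ : ContDiff ℝ (⊤ : ℕ∞) φ)
    (hψimm : ∀ x, Function.Injective (fderiv ℝ ψ x))
    (hφimm : ∀ x, Function.Injective (fderiv ℝ φ x))
    (x₀ : X) (g : G) :
    (ψ x₀ = g • φ x₀ ∧ ∀ᶠ x in nhds x₀, ∀ i,
        (ω i (ψ x)).comp (fderiv ℝ ψ x) = (ω i (φ x)).comp (fderiv ℝ φ x)) ↔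
      ∀ᶠ x in nhds x₀, ψ x = g • φ x := by
  classical
  set f : X → E := fun x => g • φ x with hf_def
  have hf : ContDiff ℝ (⊤ : ℕ∞) f := (hact g).comp hφ
  have hψd : Differentiable ℝ ψ := hψ.differentiable (by simp)
  have hφd : Differentiable ℝ φ := hφ.differentiable (by simp)
  have hgd : Differentiable ℝ (fun y : E => g • y) := (hact g).differentiable (by simp)
  have hfd : Differentiable ℝ f := hf.differentiable (by simp)
  have hfderiv : ∀ x, fderiv ℝ f x
      = (fderiv ℝ (fun y : E => g • y) (φ x)).comp (fderiv ℝ φ x) :=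
    fun x => fderiv_comp x (hgd _) (hφd _)
  have hpullf : ∀ i x, (ω i (f x)).comp (fderiv ℝ f x)
      = (ω i (φ x)).comp (fderiv ℝ φ x) := by
    intro i x
    rw [hfderiv, ← ContinuousLinearMap.comp_assoc]
    exact congrArg (fun p => ContinuousLinearMap.comp p (fderiv ℝ φ x)) (hinv g i (φ x))
  constructor
  · rintro ⟨h0, hpb⟩
    rcases Nat.eq_zero_or_pos n with hn | hn
    · have h1 : Module.finrank ℝ E = 0 := by rw [hdim, hn]
      have h2 : Subsingleton E := Module.finrank_zero_iff.1 h1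
      exact Filter.Eventually.of_forall fun x => Subsingleton.elim _ _
    have hNE : Nonempty (Fin n) := ⟨⟨0, hn⟩⟩
    -- the framing map `T y : E →L (Fin n → ℝ)`
    set T : E → (E →L[ℝ] (Fin n → ℝ)) := fun y => ContinuousLinearMap.pi (fun i => ω i y)
      with hT_def
    have hTsmooth : ContDiff ℝ (⊤ : ℕ∞) T := by
      let L : (Fin n → (E →L[ℝ] ℝ)) →ₗ[ℝ] (E →L[ℝ] (Fin n → ℝ)) :=
        { toFun := fun a => ContinuousLinearMap.pi a
          map_add' := by intro a b; ext v i; rfl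
          map_smul' := by intro c a; ext v i; rfl }
      have h1 : ContDiff ℝ (⊤ : ℕ∞) (fun y => (fun i => ω i y)) := contDiff_pi.2 hω
      exact (LinearMap.toContinuousLinearMap L).contDiff.comp h1
    have hTapp : ∀ y w i, T y w i = ω i y w := fun y w i => rfl
    have hTbij : ∀ y, Function.Bijective (T y) := by
      intro y
      have hker : ∀ w : E, T y w = 0 → w = 0 := by
        intro w hw
        by_contra hw0
        obtain ⟨ξ, hξ1, hξv⟩ := exists_dual_vector ℝ w (norm_ne_zero_iff.2 hw0)
        have hli : LinearIndependent ℝ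
            ((ContinuousLinearMap.coeLM ℝ) ∘ fun i => ω i y) :=
          (hcoframe y).map' (ContinuousLinearMap.coeLM ℝ)
            (LinearMap.ker_eq_bot.2 ContinuousLinearMap.coe_injective)
        have hcard : Fintype.card (Fin n) = Module.finrank ℝ (Module.Dual ℝ E) := by
          rw [Subspace.dual_finrank_eq, hdim, Fintype.card_fin]
        let B : Module.Basis (Fin n) ℝ (Module.Dual ℝ E) :=
          basisOfLinearIndependentOfCardEqFinrank hli hcard
        have hB : ∀ i, B i = ((ω i y : E →ₗ[ℝ] ℝ) : Module.Dual ℝ E) := by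
          intro i
          rw [show B i = ((ContinuousLinearMap.coeLM ℝ) ∘ fun i => ω i y) i from
            congrFun (coe_basisOfLinearIndependentOfCardEqFinrank hli hcard) i]
          rfl
        have hωw : ∀ i, ω i y w = 0 := by
          intro i
          have := congrFun hw i
          simpa [hTapp] using this
        have hzero : (ξ : E →ₗ[ℝ] ℝ) w = 0 := by
          have hrepr := B.sum_repr (ξ : E →ₗ[ℝ] ℝ)
          have : ((ξ : E →ₗ[ℝ] ℝ)) w = (∑ i, B.repr (ξ : E →ₗ[ℝ] ℝ) i • B i) w := by
            rw [hrepr]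
          rw [this, LinearMap.sum_apply]
          refine Finset.sum_eq_zero fun i _ => ?_
          rw [LinearMap.smul_apply, hB i]
          simp [hωw i]
        have : ‖w‖ = 0 := by
          have : ξ w = 0 := hzero
          rw [this] at hξv
          exact hξv.symm
        exact hw0 (norm_eq_zero.1 this)
      have hinj : Function.Injective (T y) := by
        intro a b hab
        have : T y (a - b) = 0 := by rw [map_sub, hab, sub_self]
        have := hker _ this
        exact sub_eq_zero.1 this
      refine ⟨hinj, ?_⟩
      have hfr : Module.finrank ℝ E = Module.finrank ℝ (Fin n → ℝ) := by
        rw [hdim, Module.finrank_fin_fun]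
      exact (LinearMap.injective_iff_surjective_of_finrank_eq_finrank hfr).1 hinj
    -- upgrade to a continuous linear equivalence
    let Φ : E → (E ≃L[ℝ] (Fin n → ℝ)) := fun y =>
      LinearEquiv.toContinuousLinearEquiv
        (LinearEquiv.ofBijective (T y).toLinearMap (hTbij y))
    have hΦT : ∀ y, ((Φ y : E →L[ℝ] (Fin n → ℝ))) = T y :=
      fun y => ContinuousLinearMap.ext fun w => rfl
    set R : E → ((Fin n → ℝ) →L[ℝ] E) :=
      fun y => ContinuousLinearMap.inverse (T y) with hR_def
    have hR : ∀ y, R y = ((Φ y).symm : (Fin n → ℝ) →L[ℝ] E) := by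
      intro y
      show ContinuousLinearMap.inverse (T y) = ((Φ y).symm : (Fin n → ℝ) →L[ℝ] E)
      rw [show T y = (Φ y : E →L[ℝ] (Fin n → ℝ)) from (hΦT y).symm]
      exact ContinuousLinearMap.inverse_equiv (Φ y)
    have key : ∀ (y : E) (w : E), R y (T y w) = w := by
      intro y w
      rw [hR y]
      have h1 : T y w = Φ y w := by rw [← hΦT y]; rfl
      rw [h1]
      simp
    have hRc1 : ContDiffAt ℝ 1 R (ψ x₀) := by
      have h1 : ContDiffAt ℝ 1
          (ContinuousLinearMap.inverse : (E →L[ℝ] (Fin n → ℝ)) → ((Fin n → ℝ) →L[ℝ] E))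
          (T (ψ x₀)) := by
        have h2 := contDiffAt_map_inverse (n := 1) (𝕜 := ℝ) (Φ (ψ x₀))
        rwa [hΦT] at h2
      exact h1.comp (ψ x₀) (hTsmooth.contDiffAt.of_le (by simp))
    obtain ⟨K, tset, htset, hK⟩ := hRc1.exists_lipschitzOnWith
    obtain ⟨ε, hε0, hball⟩ := Metric.mem_nhds_iff.1 htset
    set α : X → (X →L[ℝ] (Fin n → ℝ)) := fun x => (T (ψ x)).comp (fderiv ℝ ψ x) with hα_def
    have hαcont : Continuous α :=
      (hTsmooth.continuous.comp hψ.continuous).clm_comp (hψ.continuous_fderiv (by simp))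
    have hαf : ∀ᶠ x in nhds x₀, (T (f x)).comp (fderiv ℝ f x) = α x := by
      filter_upwards [hpb] with x hx
      rw [hα_def]
      ext w i
      have h1 := DFunLike.congr_fun (hpullf i x) w
      have h2 := DFunLike.congr_fun (hx i) w
      simp only [ContinuousLinearMap.comp_apply] at h1 h2 ⊢
      rw [hTapp, hTapp, h1, ← h2]
    set M : ℝ := ‖α x₀‖ + 1 with hM
    have hM0 : 0 < M := by positivity
    have hUα : ∀ᶠ x in nhds x₀, ‖α x‖ < M :=
      (hαcont.norm.continuousAt).eventually_lt continuousAt_const (by rw [hM]; linarith)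
    have hUψ : ∀ᶠ x in nhds x₀, ψ x ∈ Metric.ball (ψ x₀) ε :=
      hψ.continuous.continuousAt (Metric.ball_mem_nhds _ hε0)
    have hUf : ∀ᶠ x in nhds x₀, f x ∈ Metric.ball (ψ x₀) ε := by
      have h1 : ∀ᶠ x in nhds x₀, f x ∈ Metric.ball (f x₀) ε :=
        hf.continuous.continuousAt (Metric.ball_mem_nhds _ hε0)
      have h0f : ψ x₀ = f x₀ := h0
      rw [← h0f] at h1
      exact h1
    obtain ⟨r, hr0, hrball⟩ :=
      Metric.eventually_nhds_iff_ball.1 (hαf.and (hUα.and (hUψ.and hUf)))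
    have main : ∀ x ∈ Metric.ball x₀ r, ψ x = f x := by
      intro x hx
      set v : X := x - x₀ with hv_def
      set c : ℝ → X := fun t => x₀ + t • v with hc_def
      have hcmem : ∀ t ∈ Set.Icc (0:ℝ) 1, c t ∈ Metric.ball x₀ r := by
        intro t ht
        have hdist : dist (c t) x₀ = |t| * ‖v‖ := by
          rw [hc_def]
          simp [dist_eq_norm, norm_smul, Real.norm_eq_abs]
        rw [Metric.mem_ball, hdist]
        have h1 : |t| ≤ 1 := abs_le.2 ⟨by linarith [ht.1], ht.2⟩
        have h2 : ‖v‖ < r := by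
          rw [hv_def]
          simpa [dist_eq_norm] using hx
        calc |t| * ‖v‖ ≤ 1 * ‖v‖ := mul_le_mul_of_nonneg_right h1 (norm_nonneg v)
          _ = ‖v‖ := one_mul _
          _ < r := h2
      let τ : ℝ → ℝ := fun t => min (max t 0) 1
      have hτmem : ∀ t, τ t ∈ Set.Icc (0:ℝ) 1 := fun t =>
        ⟨le_min (le_max_right t 0) zero_le_one, min_le_right _ _⟩
      have hτeq : ∀ t ∈ Set.Ico (0:ℝ) 1, τ t = t := by
        intro t ht
        show min (max t 0) 1 = t
        rw [max_eq_left ht.1, min_eq_left ht.2.le]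
      set V : ℝ → E → E := fun t y => R y (α (c (τ t)) v) with hV_def
      have hanorm : ∀ t : ℝ, ‖α (c (τ t)) v‖ ≤ M * ‖v‖ := by
        intro t
        have hmem := (hrball _ (hcmem _ (hτmem t))).2.1
        calc ‖α (c (τ t)) v‖ ≤ ‖α (c (τ t))‖ * ‖v‖ := ContinuousLinearMap.le_opNorm _ _
          _ ≤ M * ‖v‖ := mul_le_mul_of_nonneg_right hmem.le (norm_nonneg v)
      have hMv0 : (0:ℝ) ≤ M * ‖v‖ := by positivity
      set K' : NNReal := K * (M * ‖v‖).toNNReal with hK'_def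
      have hK'coe : (K' : ℝ) = (K : ℝ) * (M * ‖v‖) := by
        rw [hK'_def]
        push_cast
        rw [Real.coe_toNNReal _ hMv0]
      have hVlip : ∀ t, LipschitzOnWith K' (V t) tset := by
        intro t
        apply LipschitzOnWith.of_dist_le_mul
        intro y hy z hz
        have h1 : dist (V t y) (V t z) ≤ dist (R y) (R z) * ‖α (c (τ t)) v‖ := by
          rw [dist_eq_norm, dist_eq_norm]
          calc ‖R y (α (c (τ t)) v) - R z (α (c (τ t)) v)‖
              = ‖(R y - R z) (α (c (τ t)) v)‖ := by rw [ContinuousLinearMap.sub_apply]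
            _ ≤ ‖R y - R z‖ * ‖α (c (τ t)) v‖ := ContinuousLinearMap.le_opNorm _ _
        have h2 : dist (R y) (R z) ≤ (K : ℝ) * dist y z := hK.dist_le_mul y hy z hz
        calc dist (V t y) (V t z)
            ≤ ((K : ℝ) * dist y z) * (M * ‖v‖) :=
              h1.trans (mul_le_mul h2 (hanorm t) (norm_nonneg _) (by positivity))
          _ = ((K : ℝ) * (M * ‖v‖)) * dist y z := by ring
          _ = (K' : ℝ) * dist y z := by rw [hK'coe]
      have hcderiv : ∀ t : ℝ, HasDerivAt c v t := by
        intro t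
        rw [hc_def]
        simpa using ((hasDerivAt_id t).smul_const v).const_add x₀
      have hγ : ∀ t ∈ Set.Ico (0:ℝ) 1,
          HasDerivAt (fun s => ψ (c s)) (V t (ψ (c t))) t := by
        intro t ht
        have h1 : HasDerivAt (fun s => ψ (c s)) (fderiv ℝ ψ (c t) v) t :=
          (hψd (c t)).hasFDerivAt.comp_hasDerivAt t (hcderiv t)
        have h2 : V t (ψ (c t)) = fderiv ℝ ψ (c t) v := by
          rw [hV_def]
          simp only [hτeq t ht]
          rw [hα_def]
          simp only [ContinuousLinearMap.comp_apply]
          exact key _ _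
        rwa [h2]
      have hη : ∀ t ∈ Set.Ico (0:ℝ) 1,
          HasDerivAt (fun s => f (c s)) (V t (f (c t))) t := by
        intro t ht
        have h1 : HasDerivAt (fun s => f (c s)) (fderiv ℝ f (c t) v) t :=
          (hfd (c t)).hasFDerivAt.comp_hasDerivAt t (hcderiv t)
        have hct : c t ∈ Metric.ball x₀ r := hcmem t ⟨ht.1, ht.2.le⟩
        have hα1 : (T (f (c t))).comp (fderiv ℝ f (c t)) = α (c t) := (hrball _ hct).1
        have h2 : V t (f (c t)) = fderiv ℝ f (c t) v := by
          rw [hV_def]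
          simp only [hτeq t ht]
          rw [← hα1]
          simp only [ContinuousLinearMap.comp_apply]
          exact key _ _
        rwa [h2]
      have hccont : Continuous c := by
        rw [hc_def]
        exact continuous_const.add (continuous_id.smul continuous_const)
      have heq : Set.EqOn (fun s => ψ (c s)) (fun s => f (c s)) (Set.Icc 0 1) := by
        refine ODE_solution_unique_of_mem_Icc_right (s := fun _ => tset) (fun t _ => hVlip t)
          ((hψ.continuous.comp hccont).continuousOn)
          (fun t ht => (hγ t ht).hasDerivWithinAt)
          (fun t ht => hball (hrball _ (hcmem t ⟨ht.1, ht.2.le⟩)).2.2.1)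
          ((hf.continuous.comp hccont).continuousOn)
          (fun t ht => (hη t ht).hasDerivWithinAt)
          (fun t ht => hball (hrball _ (hcmem t ⟨ht.1, ht.2.le⟩)).2.2.2)
          ?_
        have hc0 : c 0 = x₀ := by rw [hc_def]; simp
        simp only [hc0]
        exact h0
      have h1 := heq (Set.right_mem_Icc.2 zero_le_one)
      have hc1 : c 1 = x := by rw [hc_def, hv_def]; simp
      simpa [hc1] using h1
    exact Filter.eventually_of_mem (Metric.ball_mem_nhds x₀ hr0) main
  · intro hcong
    have h0 : ψ x₀ = f x₀ := hcong.self_of_nhds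
    refine ⟨h0, ?_⟩
    filter_upwards [hcong.eventually_nhds] with x hx i
    have hfe : fderiv ℝ ψ x = fderiv ℝ f x := Filter.EventuallyEq.fderiv_eq hx
    have hψx : ψ x = f x := hx.self_of_nhds
    rw [hψx, hfe, hpullf]
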